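/- arXiv:1010.2420 — 2 statements merged into one kernel-verified Lean document; each statement's English description precedes it below -/
import Mathlib

section
/- If Eve wins a generalized reachability game with k reachability sets from v0, then she has a winning strategy under which every consistent play visits all k reachability sets within the first n·k steps, where n is the number of vertices. -/
/-- An arena: a directed graph with every vertex having a successor,
and a partition of vertices between Eve (`eve v`) and Adam (`¬ eve v`). -/
structure Arena (V : Type) where
  E : V → V → Prop
  eve : V → Prop
  succ_exists : ∀ v, ∃ w, E v w

variable {V M : Type}

/-- A play from `v0`: an infinite path starting at `v0`. -/
def IsPlay (A : Arena V) (v0 : V) (π : ℕ → V) : Prop :=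
  π 0 = v0 ∧ ∀ n, A.E (π n) (π (n + 1))

/-- The finite history of a play up to time `n` (inclusive). -/
def hist (π : ℕ → V) (n : ℕ) : List V :=
  List.ofFn (fun i : Fin (n + 1) => π i)

/-- A strategy (a function from histories to vertices) is legal if it always moves along edges. -/
def Legal (A : Arena V) (σ : List V → V) : Prop :=
  ∀ (l : List V) (v : V), A.E v (σ (l ++ [v]))

/-- A play is consistent with Eve's strategy `σ`. -/
def ConsistentEve (A : Arena V) (σ : List V → V) (π : ℕ → V) : Prop :=
  ∀ n, A.eve (π n) → π (n + 1) = σ (hist π n)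

/-- A play is consistent with Adam's strategy `τ`. -/
def ConsistentAdam (A : Arena V) (τ : List V → V) (π : ℕ → V) : Prop :=
  ∀ n, ¬ A.eve (π n) → π (n + 1) = τ (hist π n)

/-- The generalized reachability objective: visit each `F i` at least once. -/
def GenReach {k : ℕ} (F : Fin k → Set V) (π : ℕ → V) : Prop :=
  ∀ i, ∃ n, π n ∈ F i

/-- Eve wins the generalized reachability game from `v0`. -/
def EveWinsGenReach {k : ℕ} (A : Arena V) (F : Fin k → Set V) (v0 : V) : Prop :=
  ∃ σ, Legal A σ ∧ ∀ π, IsPlay A v0 π → ConsistentEve A σ π → GenReach F π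

/-- Adam wins the generalized reachability game from `v0`. -/
def AdamWinsGenReach {k : ℕ} (A : Arena V) (F : Fin k → Set V) (v0 : V) : Prop :=
  ∃ τ, Legal A τ ∧ ∀ π, IsPlay A v0 π → ConsistentAdam A τ π → ¬ GenReach F π

/-- One step of the attractor computation. -/
def AttrStep (A : Arena V) (X : Set V) : Set V :=
  X ∪ {u | A.eve u ∧ ∃ v, A.E u v ∧ v ∈ X} ∪ {u | ¬ A.eve u ∧ ∀ v, A.E u v → v ∈ X}

/-- The attractor sequence `Attr_i(F)`. -/
def AttrSeq (A : Arena V) (F : Set V) : ℕ → Set V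
  | 0 => F
  | n + 1 => AttrStep A (AttrSeq A F n)

/-- The attractor `Attr(F)`: union of the attractor sequence. -/
def Attr (A : Arena V) (F : Set V) : Set V := ⋃ n, AttrSeq A F n

/-- A memory structure: initial memory state and update function on edges. -/
structure MemStruct (V M : Type) where
  m0 : M
  upd : M → V → V → M

/-- The sequence of memory states along a play. -/
def memTrace (μ : MemStruct V M) (π : ℕ → V) : ℕ → M
  | 0 => μ.m0
  | n + 1 => μ.upd (memTrace μ π n) (π n) (π (n + 1))

/-- A next-move function is legal if it always moves along edges. -/
def MemLegal (A : Arena V) (ν : V → M → V) : Prop :=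
  ∀ v m, A.E v (ν v m)

/-- Consistency of a play with Eve's finite-memory strategy `(μ, ν)`. -/
def MemConsistentEve (A : Arena V) (μ : MemStruct V M) (ν : V → M → V) (π : ℕ → V) : Prop :=
  ∀ n, A.eve (π n) → π (n + 1) = ν (π n) (memTrace μ π n)

/-- Consistency of a play with Adam's finite-memory strategy `(μ, ν)`. -/
def MemConsistentAdam (A : Arena V) (μ : MemStruct V M) (ν : V → M → V) (π : ℕ → V) : Prop :=
  ∀ n, ¬ A.eve (π n) → π (n + 1) = ν (π n) (memTrace μ π n)

/-- Eve wins with the finite-memory strategy `(μ, ν)` from `v0`. -/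
def EveWinsWithMem {k : ℕ} (A : Arena V) (F : Fin k → Set V) (v0 : V)
    (μ : MemStruct V M) (ν : V → M → V) : Prop :=
  MemLegal A ν ∧ ∀ π, IsPlay A v0 π → MemConsistentEve A μ ν π → GenReach F π

/-- Adam wins with the finite-memory strategy `(μ, ν)` from `v0`. -/
def AdamWinsWithMem {k : ℕ} (A : Arena V) (F : Fin k → Set V) (v0 : V)
    (μ : MemStruct V M) (ν : V → M → V) : Prop :=
  MemLegal A ν ∧ ∀ π, IsPlay A v0 π → MemConsistentAdam A μ ν π → ¬ GenReach F π


/-!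
For a set `S` of indices still to be visited, call a vertex a target if it lies in some `F i`,
`i ∈ S`, and Eve wins the objective for `S \ {i}` from it. If Eve wins for `S` from `v`, then `v`
lies in the attractor of the targets: otherwise Adam could keep the play outside that attractor,
whereas the first vertex at which Eve's winning play meets some `F i` is a target, since after
that prefix her strategy still wins for the indices not yet visited.

Eve therefore plays the attractor strategy towards the targets of the set `S` of indices not
yet visited. Along the play the potential `|S| · n + r`, with `r` the attractor rank of the current
vertex, drops at every step while `S` is nonempty: either `S` is unchanged and `r` drops, or `|S|`
drops and the new rank is at most `n`. It starts at most at `k · n + n` and exceeds `n` while `S`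
is nonempty, so all sets are visited within `n · k` steps.
-/

section Attractor

variable (A : Arena V)

lemma subset_attrStep (X : Set V) : X ⊆ AttrStep A X :=
  fun _ hv => Or.inl (Or.inl hv)

lemma attrStep_mono {X Y : Set V} (h : X ⊆ Y) : AttrStep A X ⊆ AttrStep A Y := by
  rintro v ((hv | ⟨he, w, hvw, hw⟩) | ⟨he, hall⟩)
  · exact Or.inl (Or.inl (h hv))
  · exact Or.inl (Or.inr ⟨he, w, hvw, h hw⟩)
  · exact Or.inr ⟨he, fun w hvw => h (hall w hvw)⟩

lemma attrSeq_monotone (X : Set V) : Monotone (AttrSeq A X) :=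
  monotone_nat_of_le_succ fun _ => subset_attrStep A _

lemma attrSeq_subset_attr (X : Set V) (n : ℕ) : AttrSeq A X n ⊆ Attr A X :=
  Set.subset_iUnion (AttrSeq A X) n

lemma Monotone.exists_le_card_eq_succ [Fintype V] {f : ℕ → Set V} (hf : Monotone f) :
    ∃ N ≤ Fintype.card V, f N = f (N + 1) := by
  by_contra! hne
  have hgrow : ∀ n ≤ Fintype.card V + 1, n ≤ (f n).ncard := by
    intro n
    induction n with
    | zero => simp
    | succ n ih =>
      intro hn
      have hlt : (f n).ncard < (f (n + 1)).ncard :=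
        Set.ncard_strictMono ((hf n.le_succ).ssubset_of_ne (hne n (by omega)))
      have := ih (by omega)
      omega
  have hle := Set.ncard_le_card (f (Fintype.card V + 1))
  rw [Nat.card_eq_fintype_card] at hle
  have := hgrow _ le_rfl
  omega

lemma attr_subset_attrSeq_card [Fintype V] (X : Set V) :
    Attr A X ⊆ AttrSeq A X (Fintype.card V) := by
  obtain ⟨N, hN, hstable⟩ := (attrSeq_monotone A X).exists_le_card_eq_succ
  have hle : ∀ m, AttrSeq A X m ⊆ AttrSeq A X N := by
    intro m
    induction m with
    | zero => exact attrSeq_monotone A X N.zero_le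
    | succ m ih =>
      calc AttrSeq A X (m + 1) = AttrStep A (AttrSeq A X m) := rfl
        _ ⊆ AttrStep A (AttrSeq A X N) := attrStep_mono A ih
        _ = AttrSeq A X N := hstable.symm
  exact Set.iUnion_subset fun m => (hle m).trans (attrSeq_monotone A X hN)

lemma attrStep_attr_subset [Fintype V] (X : Set V) : AttrStep A (Attr A X) ⊆ Attr A X :=
  (attrStep_mono A (attr_subset_attrSeq_card A X)).trans
    (attrSeq_subset_attr A X (Fintype.card V + 1))

lemma attr_subset_attr_of_subset [Fintype V] {X Y : Set V} (h : X ⊆ Attr A Y) :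
    Attr A X ⊆ Attr A Y := by
  refine Set.iUnion_subset fun n => ?_
  induction n with
  | zero => exact h
  | succ n ih => exact (attrStep_mono A ih).trans (attrStep_attr_subset A Y)

/-- Junk value `0` outside `Attr A X`. -/
noncomputable def attrRank (X : Set V) (v : V) : ℕ :=
  sInf {n | v ∈ AttrSeq A X n}

variable {A}

lemma mem_attrSeq_attrRank {X : Set V} {v : V} (h : v ∈ Attr A X) :
    v ∈ AttrSeq A X (attrRank A X v) :=
  Nat.sInf_mem (Set.mem_iUnion.mp h)

lemma notMem_attrSeq_of_lt_attrRank {X : Set V} {v : V} {n : ℕ} (h : n < attrRank A X v) :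
    v ∉ AttrSeq A X n :=
  Nat.notMem_of_lt_sInf h

lemma attrRank_le {X : Set V} {v : V} {n : ℕ} (h : v ∈ AttrSeq A X n) : attrRank A X v ≤ n :=
  Nat.sInf_le h

lemma attrRank_le_card [Fintype V] {X : Set V} {v : V} (h : v ∈ Attr A X) :
    attrRank A X v ≤ Fintype.card V :=
  attrRank_le (attr_subset_attrSeq_card A X h)

lemma attrRank_pos {X : Set V} {v : V} (h : v ∈ Attr A X) (hX : v ∉ X) : 0 < attrRank A X v :=
  Nat.pos_of_ne_zero fun h0 => hX (h0 ▸ mem_attrSeq_attrRank h :)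

end Attractor

section Moves

variable (A : Arena V)

noncomputable def pick (v : V) (P : V → Prop) : V :=
  open Classical in
  if h : ∃ w, A.E v w ∧ P w then h.choose else (A.succ_exists v).choose

lemma pick_edge (v : V) (P : V → Prop) : A.E v (pick A v P) := by
  unfold pick
  split_ifs with h
  · exact h.choose_spec.1
  · exact (A.succ_exists v).choose_spec

lemma pick_spec {v : V} {P : V → Prop} (h : ∃ w, A.E v w ∧ P w) : P (pick A v P) := by
  unfold pick
  rw [dif_pos h]
  exact h.choose_spec.2

noncomputable def attrMove (X : Set V) (v : V) : V :=
  pick A v (· ∈ AttrSeq A X (attrRank A X v - 1))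

noncomputable def trapMove (X : Set V) (v : V) : V :=
  pick A v (· ∉ Attr A X)

lemma edge_attrMove (X : Set V) (v : V) : A.E v (attrMove A X v) := pick_edge A v _

lemma edge_trapMove (X : Set V) (v : V) : A.E v (trapMove A X v) := pick_edge A v _

variable {A}

lemma attrRank_lt_of_edge {X : Set V} {v w : V} (hv : v ∈ Attr A X) (hX : v ∉ X)
    (hvw : A.E v w) (hmove : A.eve v → w = attrMove A X v) :
    w ∈ Attr A X ∧ attrRank A X w < attrRank A X v := by
  obtain ⟨r, hr⟩ : ∃ r, attrRank A X v = r + 1 :=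
    Nat.exists_eq_add_one.mpr (attrRank_pos hv hX)
  have hstep : v ∈ AttrSeq A X (r + 1) := hr ▸ mem_attrSeq_attrRank hv
  have hprev : v ∉ AttrSeq A X r := notMem_attrSeq_of_lt_attrRank (by omega)
  suffices hw : w ∈ AttrSeq A X r from
    ⟨attrSeq_subset_attr A X r hw, hr ▸ Nat.lt_succ_of_le (attrRank_le hw)⟩
  rcases hstep with (h | ⟨he, hex⟩) | ⟨-, hall⟩
  · exact absurd h hprev
  · rw [hmove he, attrMove, hr]
    exact pick_spec A hex
  · exact hall w hvw

lemma notMem_attr_of_edge [Fintype V] {X : Set V} {v w : V} (hv : v ∉ Attr A X)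
    (hvw : A.E v w) (hmove : ¬ A.eve v → w = trapMove A X v) : w ∉ Attr A X := by
  by_cases he : A.eve v
  · exact fun hw => hv (attrStep_attr_subset A X (Or.inl (Or.inr ⟨he, w, hvw, hw⟩)))
  · have hex : ∃ u, A.E v u ∧ u ∉ Attr A X := by
      by_contra! hall
      exact hv (attrStep_attr_subset A X (Or.inr ⟨he, hall⟩))
    rw [hmove he]
    exact pick_spec A hex

end Moves

section Histories

lemma hist_succ (π : ℕ → V) (n : ℕ) : hist π (n + 1) = hist π n ++ [π (n + 1)] :=
  List.ofFn_succ_last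

lemma exists_hist_eq_append (π : ℕ → V) (n : ℕ) : ∃ l, hist π n = l ++ [π n] := by
  cases n with
  | zero => exact ⟨[], rfl⟩
  | succ n => exact ⟨hist π n, hist_succ π n⟩

lemma getLast?_getD_append (l : List V) (v w : V) : (l ++ [w]).getLast?.getD v = w := by
  rw [List.getLast?_concat, Option.getD_some]

lemma getLast?_getD_hist (π : ℕ → V) (n : ℕ) (v : V) : (hist π n).getLast?.getD v = π n := by
  obtain ⟨l, hl⟩ := exists_hist_eq_append π n
  rw [hl, getLast?_getD_append]

lemma mem_hist {π : ℕ → V} {n : ℕ} {u : V} : u ∈ hist π n ↔ ∃ m ≤ n, π m = u := by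
  simp only [hist, List.mem_ofFn]
  constructor
  · rintro ⟨i, rfl⟩
    exact ⟨i, Nat.lt_succ_iff.mp i.isLt, rfl⟩
  · rintro ⟨m, hm, rfl⟩
    exact ⟨⟨m, Nat.lt_succ_iff.mpr hm⟩, rfl⟩

lemma hist_congr {π ρ : ℕ → V} {n : ℕ} (h : ∀ t ≤ n, π t = ρ t) : hist π n = hist ρ n :=
  List.ofFn_inj.mpr (funext fun i => h i (Nat.lt_succ_iff.mp i.isLt))

lemma hist_add (π : ℕ → V) (m n : ℕ) :
    hist π (m + n) = List.ofFn (fun i : Fin m => π i) ++ hist (fun t => π (m + t)) n := by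
  rw [hist, show m + n + 1 = m + (n + 1) by omega, List.ofFn_add]
  rfl

lemma Legal.edge_hist {A : Arena V} {σ : List V → V} (hσ : Legal A σ) (π : ℕ → V) (n : ℕ) :
    A.E (π n) (σ (hist π n)) := by
  obtain ⟨l, hl⟩ := exists_hist_eq_append π n
  rw [hl]
  exact hσ l (π n)

end Histories

section Outcome

open scoped Classical

variable (A : Arena V) (σ τ : List V → V) (v0 : V)

noncomputable def outcomeHist : ℕ → List V
  | 0 => [v0]
  | n + 1 =>
    let l := outcomeHist n
    l ++ [if A.eve (l.getLast?.getD v0) then σ l else τ l]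

noncomputable def outcome (n : ℕ) : V :=
  (outcomeHist A σ τ v0 n).getLast?.getD v0

lemma outcome_zero : outcome A σ τ v0 0 = v0 := rfl

lemma hist_outcome (n : ℕ) : hist (outcome A σ τ v0) n = outcomeHist A σ τ v0 n := by
  induction n with
  | zero => rfl
  | succ n ih =>
    rw [hist_succ, ih]
    simp [outcome, outcomeHist]

lemma outcome_succ (n : ℕ) :
    outcome A σ τ v0 (n + 1) = if A.eve (outcome A σ τ v0 n) then σ (hist (outcome A σ τ v0) n)
      else τ (hist (outcome A σ τ v0) n) := by
  rw [hist_outcome]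
  simp only [outcome, outcomeHist, List.getLast?_concat, Option.getD_some]
  congr

variable {A σ τ}

lemma isPlay_outcome (hσ : Legal A σ) (hτ : Legal A τ) : IsPlay A v0 (outcome A σ τ v0) := by
  refine ⟨outcome_zero A σ τ v0, fun n => ?_⟩
  rw [outcome_succ]
  split_ifs
  · exact hσ.edge_hist _ n
  · exact hτ.edge_hist _ n

lemma consistentEve_outcome : ConsistentEve A σ (outcome A σ τ v0) := fun n he => by
  rw [outcome_succ, if_pos he]

lemma consistentAdam_outcome : ConsistentAdam A τ (outcome A σ τ v0) := fun n he => by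
  rw [outcome_succ, if_neg he]

end Outcome

section Residual

open scoped Classical

variable {A : Arena V}

def splice (π : ℕ → V) (m : ℕ) (ρ : ℕ → V) (t : ℕ) : V :=
  if t < m then π t else ρ (t - m)

variable {π ρ : ℕ → V} {m : ℕ}

lemma splice_of_le (hρ : ρ 0 = π m) {t : ℕ} (ht : t ≤ m) : splice π m ρ t = π t := by
  rcases ht.lt_or_eq with ht | rfl
  · simp [splice, ht]
  · simp [splice, hρ]

lemma splice_add (t : ℕ) : splice π m ρ (m + t) = ρ t := by
  simp [splice]

lemma hist_splice_add (t : ℕ) :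
    hist (splice π m ρ) (m + t) = List.ofFn (fun i : Fin m => π i) ++ hist ρ t := by
  rw [hist_add]
  congr 1
  · exact List.ofFn_inj.mpr (funext fun i => if_pos i.isLt)
  · exact hist_congr fun s _ => splice_add s

lemma isPlay_splice {v0 : V} (hπ : IsPlay A v0 π) (hρ : IsPlay A (π m) ρ) :
    IsPlay A v0 (splice π m ρ) := by
  refine ⟨(splice_of_le hρ.1 m.zero_le).trans hπ.1, fun t => ?_⟩
  rcases lt_or_ge t m with ht | ht
  · rw [splice_of_le hρ.1 ht.le, splice_of_le hρ.1 ht]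
    exact hπ.2 t
  · obtain ⟨s, rfl⟩ := Nat.exists_eq_add_of_le ht
    rw [splice_add, add_assoc, splice_add]
    exact hρ.2 s

lemma consistentEve_splice {σ : List V → V} (hπ : ConsistentEve A σ π) (hρ0 : ρ 0 = π m)
    (hρ : ConsistentEve A (fun l => σ (List.ofFn (fun i : Fin m => π i) ++ l)) ρ) :
    ConsistentEve A σ (splice π m ρ) := by
  intro t he
  rcases lt_or_ge t m with ht | ht
  · rw [splice_of_le hρ0 ht.le] at he
    rw [splice_of_le hρ0 ht, hist_congr fun s hs => splice_of_le hρ0 (hs.trans ht.le)]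
    exact hπ t he
  · obtain ⟨s, rfl⟩ := Nat.exists_eq_add_of_le ht
    rw [splice_add] at he
    rw [add_assoc, splice_add, hist_splice_add]
    exact hρ s he

variable {k : ℕ}

def EveWinsFrom (A : Arena V) (F : Fin k → Set V) (S : Finset (Fin k)) (v : V) : Prop :=
  ∃ σ, Legal A σ ∧ ∀ π, IsPlay A v π → ConsistentEve A σ π → ∀ i ∈ S, ∃ n, π n ∈ F i

lemma EveWinsFrom.mono {F : Fin k → Set V} {S S' : Finset (Fin k)} {v : V} (hS : S' ⊆ S)
    (h : EveWinsFrom A F S v) : EveWinsFrom A F S' v :=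
  let ⟨σ, hσ, hwin⟩ := h
  ⟨σ, hσ, fun π hπ hc i hi => hwin π hπ hc i (hS hi)⟩

lemma EveWinsGenReach.eveWinsFrom_univ {F : Fin k → Set V} {v0 : V}
    (h : EveWinsGenReach A F v0) : EveWinsFrom A F Finset.univ v0 :=
  let ⟨σ, hσ, hwin⟩ := h
  ⟨σ, hσ, fun π hπ hc i _ => hwin π hπ hc i⟩

lemma eveWinsFrom_residual {F : Fin k → Set V} {S : Finset (Fin k)} {v0 : V}
    {σ : List V → V} (hσ : Legal A σ)
    (hwin : ∀ π, IsPlay A v0 π → ConsistentEve A σ π → ∀ i ∈ S, ∃ n, π n ∈ F i)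
    (hπ : IsPlay A v0 π) (hc : ConsistentEve A σ π) (m : ℕ) :
    EveWinsFrom A F (S.filter fun i => ∀ t < m, π t ∉ F i) (π m) := by
  refine ⟨fun l => σ (List.ofFn (fun i : Fin m => π i) ++ l),
    fun l v => by simpa only [List.append_assoc] using hσ (_ ++ l) v, fun ρ hρ hcρ i hi => ?_⟩
  obtain ⟨hiS, hfresh⟩ := Finset.mem_filter.mp hi
  obtain ⟨n, hn⟩ := hwin _ (isPlay_splice hπ hρ) (consistentEve_splice hc hρ.1 hcρ) i hiS
  rcases lt_or_ge n m with hnm | hnm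
  · exact absurd (splice_of_le hρ.1 hnm.le ▸ hn) (hfresh n hnm)
  · obtain ⟨s, rfl⟩ := Nat.exists_eq_add_of_le hnm
    rw [splice_add] at hn
    exact ⟨s, hn⟩

end Residual

section Progress

open scoped Classical

variable {k : ℕ} {A : Arena V} {F : Fin k → Set V}

variable (A F) in
def progressTarget (S : Finset (Fin k)) : Set V :=
  ⋃ i ∈ S, F i ∩ {v | EveWinsFrom A F (S.erase i) v}

lemma mem_attr_progressTarget [Fintype V] {S : Finset (Fin k)} {v : V} (hS : S.Nonempty)
    (hv : EveWinsFrom A F S v) : v ∈ Attr A (progressTarget A F S) := by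
  by_contra hvX
  set X := progressTarget A F S
  obtain ⟨σ, hσ, hwin⟩ := hv
  let τ : List V → V := fun l => trapMove A X (l.getLast?.getD v)
  have hτ : Legal A τ := fun l w => by
    simpa only [τ, getLast?_getD_append] using edge_trapMove A X w
  set π := outcome A σ τ v
  have hπ : IsPlay A v π := isPlay_outcome v hσ hτ
  have hout : ∀ n, π n ∉ Attr A X := by
    intro n
    induction n with
    | zero => exact hvX
    | succ n ih =>
      refine notMem_attr_of_edge ih (hπ.2 n) fun he => ?_
      exact (consistentAdam_outcome v n he).trans (by simp only [τ, getLast?_getD_hist]; rfl)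
  obtain ⟨i₀, hi₀⟩ := hS
  obtain ⟨n₀, hn₀⟩ := hwin π hπ (consistentEve_outcome v) i₀ hi₀
  have hvisit : ∃ n, ∃ i ∈ S, π n ∈ F i := ⟨n₀, i₀, hi₀, hn₀⟩
  obtain ⟨i, hiS, hiF⟩ := Nat.find_spec hvisit
  have hres := eveWinsFrom_residual hσ hwin hπ (consistentEve_outcome v) (Nat.find hvisit)
  have herase : S.erase i ⊆ S.filter fun j => ∀ t < Nat.find hvisit, π t ∉ F j :=
    fun j hj => Finset.mem_filter.mpr ⟨Finset.mem_of_mem_erase hj,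
      fun t ht hjF => Nat.find_min hvisit ht ⟨j, Finset.mem_of_mem_erase hj, hjF⟩⟩
  have htarget : π (Nat.find hvisit) ∈ X := Set.mem_biUnion hiS ⟨hiF, hres.mono herase⟩
  exact hout _ (attrSeq_subset_attr A X 0 htarget)

lemma attr_progressTarget_subset [Fintype V] {S S' : Finset (Fin k)} (hS : S' ⊆ S)
    (hS' : S'.Nonempty) : Attr A (progressTarget A F S) ⊆ Attr A (progressTarget A F S') := by
  refine attr_subset_attr_of_subset A fun v hv => ?_
  simp only [progressTarget, Set.mem_iUnion, Set.mem_inter_iff] at hv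
  obtain ⟨i, hiS, hiF, hwin⟩ := hv
  by_cases hi : i ∈ S'
  · exact attrSeq_subset_attr A _ 0
      (Set.mem_biUnion hi ⟨hiF, hwin.mono (Finset.erase_subset_erase i hS)⟩)
  · exact mem_attr_progressTarget hS' (hwin.mono fun j hj =>
      Finset.mem_erase.mpr ⟨ne_of_mem_of_not_mem hj hi, hS hj⟩)

end Progress

section VisitStrategy

open scoped Classical

variable {k : ℕ}

noncomputable def unvisited (F : Fin k → Set V) (l : List V) : Finset (Fin k) :=
  Finset.univ.filter fun i => ∀ u ∈ l, u ∉ F i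

noncomputable def visitStrategy (A : Arena V) (F : Fin k → Set V) (v0 : V) (l : List V) : V :=
  attrMove A (progressTarget A F (unvisited F l)) (l.getLast?.getD v0)

lemma legal_visitStrategy (A : Arena V) (F : Fin k → Set V) (v0 : V) :
    Legal A (visitStrategy A F v0) := fun l w => by
  simpa only [visitStrategy, getLast?_getD_append] using edge_attrMove A _ w

noncomputable def remaining (F : Fin k → Set V) (π : ℕ → V) (n : ℕ) : Finset (Fin k) :=
  unvisited F (hist π n)

variable {A : Arena V} {F : Fin k → Set V} {v0 : V} {π : ℕ → V}

lemma mem_remaining {n : ℕ} {i : Fin k} : i ∈ remaining F π n ↔ ∀ m ≤ n, π m ∉ F i := by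
  simp [remaining, unvisited, mem_hist]

lemma notMem_remaining {n : ℕ} {i : Fin k} : i ∉ remaining F π n ↔ ∃ m ≤ n, π m ∈ F i := by
  simp [mem_remaining]

lemma remaining_antitone : Antitone (remaining F π) :=
  antitone_nat_of_succ_le fun _ _ hi =>
    mem_remaining.mpr fun m hm => mem_remaining.mp hi m (Nat.le_succ_of_le hm)

lemma notMem_progressTarget_remaining (n : ℕ) : π n ∉ progressTarget A F (remaining F π n) := by
  simp only [progressTarget, Set.mem_iUnion, Set.mem_inter_iff]
  rintro ⟨i, hi, hiF, -⟩
  exact mem_remaining.mp hi n le_rfl hiF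

noncomputable def visitPotential [Fintype V] (A : Arena V) (F : Fin k → Set V) (π : ℕ → V)
    (n : ℕ) : ℕ :=
  (remaining F π n).card * Fintype.card V + attrRank A (progressTarget A F (remaining F π n)) (π n)

lemma visitStrategy_step (hπ : IsPlay A v0 π) (hc : ConsistentEve A (visitStrategy A F v0) π)
    {n : ℕ} (hn : π n ∈ Attr A (progressTarget A F (remaining F π n))) :
    π (n + 1) ∈ Attr A (progressTarget A F (remaining F π n)) ∧
      attrRank A (progressTarget A F (remaining F π n)) (π (n + 1)) <
        attrRank A (progressTarget A F (remaining F π n)) (π n) :=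
  attrRank_lt_of_edge hn (notMem_progressTarget_remaining n) (hπ.2 n) fun he =>
    (hc n he).trans (by rw [visitStrategy, getLast?_getD_hist]; rfl)

variable [Fintype V]

lemma mem_attr_remaining (hwin : EveWinsFrom A F Finset.univ v0) (hπ : IsPlay A v0 π)
    (hc : ConsistentEve A (visitStrategy A F v0) π) :
    ∀ n, (remaining F π n).Nonempty → π n ∈ Attr A (progressTarget A F (remaining F π n))
  | 0, hne => hπ.1 ▸ mem_attr_progressTarget hne (hwin.mono (Finset.subset_univ _))
  | n + 1, hne =>
    have hsub := remaining_antitone (F := F) (π := π) (n.le_add_right 1)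
    attr_progressTarget_subset hsub hne
      (visitStrategy_step hπ hc (mem_attr_remaining hwin hπ hc n (hne.mono hsub))).1

lemma visitPotential_succ_lt (hwin : EveWinsFrom A F Finset.univ v0) (hπ : IsPlay A v0 π)
    (hc : ConsistentEve A (visitStrategy A F v0) π) {n : ℕ}
    (hne : (remaining F π (n + 1)).Nonempty) :
    visitPotential A F π (n + 1) < visitPotential A F π n := by
  have hsub := remaining_antitone (F := F) (π := π) (n.le_add_right 1)
  have hmem := mem_attr_remaining hwin hπ hc n (hne.mono hsub)
  obtain ⟨-, hlt⟩ := visitStrategy_step hπ hc hmem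
  unfold visitPotential
  by_cases heq : remaining F π (n + 1) = remaining F π n
  · rw [heq]
    omega
  · have hcard := Finset.card_lt_card (hsub.ssubset_of_ne heq)
    have hrank := attrRank_le_card (mem_attr_remaining hwin hπ hc (n + 1) hne)
    have hpos := attrRank_pos hmem (notMem_progressTarget_remaining n)
    have hmul := Nat.mul_le_mul_right (Fintype.card V) hcard
    rw [Nat.succ_mul] at hmul
    omega

lemma add_visitPotential_le (hwin : EveWinsFrom A F Finset.univ v0) (hπ : IsPlay A v0 π)
    (hc : ConsistentEve A (visitStrategy A F v0) π) :
    ∀ n, (remaining F π n).Nonempty → n + visitPotential A F π n ≤ visitPotential A F π 0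
  | 0, _ => by simp
  | n + 1, hne => by
    have := add_visitPotential_le hwin hπ hc n (hne.mono (remaining_antitone (n.le_add_right 1)))
    have := visitPotential_succ_lt hwin hπ hc hne
    omega

lemma remaining_card_mul_eq_empty (hwin : EveWinsFrom A F Finset.univ v0) (hπ : IsPlay A v0 π)
    (hc : ConsistentEve A (visitStrategy A F v0) π) :
    remaining F π (Fintype.card V * k) = ∅ := by
  set N := Fintype.card V * k
  by_contra hempty
  have hne := Finset.nonempty_iff_ne_empty.mpr hempty
  have hne₀ := hne.mono (remaining_antitone N.zero_le)
  have hbound := add_visitPotential_le hwin hπ hc N hne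
  have hlow : Fintype.card V + 1 ≤ visitPotential A F π N := by
    have := Nat.mul_le_mul_right (Fintype.card V) (Finset.card_pos.mpr hne)
    have := attrRank_pos (mem_attr_remaining hwin hπ hc N hne) (notMem_progressTarget_remaining N)
    unfold visitPotential
    omega
  have hhigh : visitPotential A F π 0 ≤ N + Fintype.card V := by
    have hcard := Nat.mul_le_mul_right (Fintype.card V)
      ((Finset.card_le_univ (remaining F π 0)).trans_eq (Fintype.card_fin k))
    have := attrRank_le_card (mem_attr_remaining hwin hπ hc 0 hne₀)
    unfold visitPotential
    rw [Nat.mul_comm k] at hcard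
    omega
  omega

end VisitStrategy

/-- if Eve wins a generalized reachability game with `k` sets, she has a
winning strategy under which every consistent play visits all sets within `n·k` steps. -/
theorem eveWins_genReach_bounded_steps {V : Type} [Fintype V] {k : ℕ}
    (A : Arena V) (F : Fin k → Set V) (v0 : V)
    (h : EveWinsGenReach A F v0) :
    ∃ σ, Legal A σ ∧ ∀ π, IsPlay A v0 π → ConsistentEve A σ π →
      ∀ i, ∃ m ≤ Fintype.card V * k, π m ∈ F i := by
  refine ⟨visitStrategy A F v0, legal_visitStrategy A F v0, fun π hπ hc i => ?_⟩
  have hdone := remaining_card_mul_eq_empty h.eveWinsFrom_univ hπ hc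
  exact notMem_remaining.mp (hdone ▸ Finset.notMem_empty i)
end

section
/- In a generalized reachability game with k reachability sets, if Adam has a winning strategy from v0, then he has a winning strategy from v0 using at most C(k, ⌊k/2⌋) memory states. -/
variable {V M : Type}

/-!
Consider the game on pairs `(v, S)`, where `S` is the set of targets already visited. At each
vertex the inclusion-maximal sets `S` from which Adam wins form an antichain of subsets of
`Fin k`, hence number at most `C(k, ⌊k/2⌋)` by Sperner's theorem. Adam's memory is the index of one maximal winning set `S` at the current vertex. He moves so as to
stay winning from `(v', S ∪ targets v)` and then re-indexes to a maximal winning superset at `v'`.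
Along a play the tracked set therefore stays winning and contains every target visited so far;
since a winning set misses some target, the play cannot visit them all.
-/

open Finset
open scoped Classical

variable {k : ℕ}

lemma Finset.exists_fin_toList_getD_eq {α : Type*} {s : Finset α} {a : α} (d : α) {n : ℕ}
    (ha : a ∈ s) (hs : #s ≤ n) : ∃ j : Fin n, s.toList.getD j d = a := by
  obtain ⟨j, hj, rfl⟩ := List.mem_iff_getElem.1 (mem_toList.2 ha)
  exact ⟨⟨j, hj.trans_le (s.length_toList ▸ hs)⟩, List.getD_eq_getElem _ _ hj⟩

lemma hist_eq_ofFn_append (π : ℕ → V) (n : ℕ) :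
    hist π n = List.ofFn (fun i : Fin n => π i) ++ [π n] := by
  rw [hist, List.ofFn_succ', List.concat_eq_append]
  rfl

lemma hist_cons (v : V) (p : ℕ → V) (n : ℕ) :
    hist (Stream'.cons v p) (n + 1) = v :: hist p n := by
  simp only [hist, List.ofFn_succ]
  rfl

lemma IsPlay.cons {A : Arena V} {v w : V} {p : ℕ → V} (hp : IsPlay A w p) (hvw : A.E v w) :
    IsPlay A v (Stream'.cons v p) := by
  refine ⟨rfl, fun n => ?_⟩
  cases n with
  | zero => simpa [Stream'.cons, hp.1] using hvw
  | succ n => exact hp.2 n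

lemma GenReach.exists_bound {F : Fin k → Set V} {π : ℕ → V} (h : GenReach F π) :
    ∃ N, ∀ i, ∃ m < N, π m ∈ F i := by
  choose g hg using h
  exact ⟨univ.sup g + 1, fun i => ⟨g i, Nat.lt_succ_of_le (le_sup (mem_univ i)), hg i⟩⟩

section ConsistentPlay

variable (A : Arena V) (τ : List V → V)

/-- Adam follows `τ`, Eve takes a fixed successor; each stage also carries the history before
the current vertex. -/
noncomputable def adamPlay (v : V) : ℕ → List V × V
  | 0 => ([], v)
  | n + 1 =>
    let s := adamPlay v n
    (s.1 ++ [s.2], if A.eve s.2 then (A.succ_exists s.2).choose else τ (s.1 ++ [s.2]))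

lemma adamPlay_fst (v : V) (n : ℕ) :
    (adamPlay A τ v n).1 = List.ofFn (fun i : Fin n => (adamPlay A τ v i).2) := by
  induction n with
  | zero => rfl
  | succ n ih =>
    change (adamPlay A τ v n).1 ++ [(adamPlay A τ v n).2] = _
    rw [ih, List.ofFn_succ', List.concat_eq_append]
    rfl

variable {A τ} in
lemma Legal.exists_consistentAdam (hτ : Legal A τ) (v : V) :
    ∃ π, IsPlay A v π ∧ ConsistentAdam A τ π := by
  let π n := (adamPlay A τ v n).2
  have hhist : ∀ n, hist π n = (adamPlay A τ v n).1 ++ [π n] := fun n => by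
    rw [hist_eq_ofFn_append, adamPlay_fst]
  refine ⟨π, ⟨rfl, fun n => ?_⟩, fun n hn => ?_⟩
  · change A.E (π n) (if A.eve (π n) then _ else _)
    split
    · exact (A.succ_exists _).choose_spec
    · exact hτ _ _
  · change (if A.eve (π n) then _ else _) = _
    rw [if_neg hn, hhist]

end ConsistentPlay

section SubsetGame

variable (A : Arena V) (F : Fin k → Set V)

/-- Adam wins from `(v, S)` in the game that tracks the set `S` of targets already visited. -/
def AdamWinsAfter (S : Finset (Fin k)) (v : V) : Prop :=
  ∃ τ, Legal A τ ∧ ∀ π, IsPlay A v π → ConsistentAdam A τ π → ∃ i ∉ S, ∀ n, π n ∉ F i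

noncomputable def targets (v : V) : Finset (Fin k) := {i | v ∈ F i}

variable {A F}

lemma mem_targets {v : V} {i : Fin k} : i ∈ targets F v ↔ v ∈ F i := by
  simp [targets]

lemma adamWinsAfter_empty {v : V} (h : AdamWinsGenReach A F v) : AdamWinsAfter A F ∅ v := by
  obtain ⟨τ, hτ, hwin⟩ := h
  refine ⟨τ, hτ, fun π hπ hc => ?_⟩
  simpa [GenReach] using hwin π hπ hc

/-- Witnessed by the residual strategy `l ↦ τ (v :: l)`. -/
lemma adamWinsAfter_of_residual {S : Finset (Fin k)} {v w : V} {τ : List V → V}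
    (hτ : Legal A τ)
    (hwin : ∀ π, IsPlay A v π → ConsistentAdam A τ π → ∃ i ∉ S, ∀ n, π n ∉ F i)
    (hvw : A.E v w) (hτw : ¬ A.eve v → w = τ [v]) :
    AdamWinsAfter A F (S ∪ targets F v) w := by
  refine ⟨fun l => τ (v :: l), fun l u => hτ (v :: l) u, fun p hp hc => ?_⟩
  have hcons : ConsistentAdam A τ (Stream'.cons v p) := fun n hn => by
    cases n with
    | zero => simpa [Stream'.cons, hp.1, hist] using hτw hn
    | succ n => rw [hist_cons]; exact hc n hn
  obtain ⟨i, hiS, hav⟩ := hwin _ (hp.cons hvw) hcons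
  refine ⟨i, ?_, fun n => hav (n + 1)⟩
  rw [mem_union, mem_targets, not_or]
  exact ⟨hiS, hav 0⟩

lemma AdamWinsAfter.eve_move {S : Finset (Fin k)} {v w : V} (h : AdamWinsAfter A F S v)
    (hv : A.eve v) (hvw : A.E v w) : AdamWinsAfter A F (S ∪ targets F v) w :=
  let ⟨_, hτ, hwin⟩ := h
  adamWinsAfter_of_residual hτ hwin hvw (absurd hv)

lemma AdamWinsAfter.exists_adam_move {S : Finset (Fin k)} {v : V} (h : AdamWinsAfter A F S v) :
    ∃ w, A.E v w ∧ AdamWinsAfter A F (S ∪ targets F v) w := by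
  obtain ⟨τ, hτ, hwin⟩ := h
  have hvτ : A.E v (τ [v]) := by simpa using hτ [] v
  exact ⟨τ [v], hvτ, adamWinsAfter_of_residual hτ hwin hvτ fun _ => rfl⟩

lemma AdamWinsAfter.ne_univ {S : Finset (Fin k)} {v : V} (h : AdamWinsAfter A F S v) :
    S ≠ univ := by
  obtain ⟨τ, hτ, hwin⟩ := h
  obtain ⟨π, hπ, hc⟩ := hτ.exists_consistentAdam v
  obtain ⟨i, hiS, -⟩ := hwin π hπ hc
  exact fun hS => hiS (hS ▸ mem_univ i)

end SubsetGame

section MaximalWinningSets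

variable (A : Arena V) (F : Fin k → Set V)

noncomputable def maximalWins (v : V) : Finset (Finset (Fin k)) :=
  {S | Maximal (AdamWinsAfter A F · v) S}

/-- Memory states index the maximal winning sets, so one state names different sets at
different vertices (and indices beyond their number name `∅`). -/
noncomputable def maximalWinAt (v : V) (j : Fin (k.choose (k / 2))) : Finset (Fin k) :=
  (maximalWins A F v).toList.getD j ∅

variable {A F}

lemma mem_maximalWins {S : Finset (Fin k)} {v : V} :
    S ∈ maximalWins A F v ↔ Maximal (AdamWinsAfter A F · v) S := by
  simp [maximalWins]

lemma card_maximalWins_le (v : V) : #(maximalWins A F v) ≤ k.choose (k / 2) := by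
  have hanti : IsAntichain (· ⊆ ·) (SetLike.coe (maximalWins A F v)) := by
    convert setOfPred_maximal_antichain (AdamWinsAfter A F · v) using 1
    ext S
    exact mem_maximalWins
  simpa using hanti.sperner

lemma AdamWinsAfter.exists_subset_mem_maximalWins {S : Finset (Fin k)} {v : V}
    (h : AdamWinsAfter A F S v) : ∃ S' ∈ maximalWins A F v, S ⊆ S' := by
  obtain ⟨S', hSS', hmax⟩ := Finite.exists_le_maximal (p := (AdamWinsAfter A F · v)) h
  exact ⟨S', mem_maximalWins.2 hmax, hSS'⟩

lemma exists_maximalWinAt_eq {S : Finset (Fin k)} {v : V} (hS : S ∈ maximalWins A F v) :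
    ∃ j : Fin (k.choose (k / 2)), maximalWinAt A F v j = S :=
  Finset.exists_fin_toList_getD_eq ∅ hS (card_maximalWins_le v)

end MaximalWinningSets

section Strategy

variable (A : Arena V) (F : Fin k → Set V)

noncomputable def adamMove (v : V) (j : Fin (k.choose (k / 2))) : V :=
  if h : ∃ w, A.E v w ∧ AdamWinsAfter A F (maximalWinAt A F v j ∪ targets F v) w then h.choose
  else (A.succ_exists v).choose

noncomputable def memUpdate (j : Fin (k.choose (k / 2))) (v w : V) : Fin (k.choose (k / 2)) :=
  if h : ∃ j', maximalWinAt A F w j' ∈ maximalWins A F w ∧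
      maximalWinAt A F v j ∪ targets F v ⊆ maximalWinAt A F w j' then h.choose
  else j

noncomputable def adamMemory (j₀ : Fin (k.choose (k / 2))) :
    MemStruct V (Fin (k.choose (k / 2))) :=
  ⟨j₀, memUpdate A F⟩

noncomputable def trackedSet (j₀ : Fin (k.choose (k / 2))) (π : ℕ → V) (n : ℕ) :
    Finset (Fin k) :=
  maximalWinAt A F (π n) (memTrace (adamMemory A F j₀) π n)

variable {A F}

lemma memLegal_adamMove : MemLegal A (adamMove A F) := fun v j => by
  unfold adamMove
  split
  · next h => exact h.choose_spec.1
  · exact (A.succ_exists v).choose_spec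

lemma adamWinsAfter_adamMove {v : V} {j : Fin (k.choose (k / 2))}
    (h : AdamWinsAfter A F (maximalWinAt A F v j) v) :
    AdamWinsAfter A F (maximalWinAt A F v j ∪ targets F v) (adamMove A F v j) := by
  have hex := h.exists_adam_move
  rw [adamMove, dif_pos hex]
  exact hex.choose_spec.2

lemma memUpdate_spec {j : Fin (k.choose (k / 2))} {v w : V}
    (h : AdamWinsAfter A F (maximalWinAt A F v j ∪ targets F v) w) :
    maximalWinAt A F w (memUpdate A F j v w) ∈ maximalWins A F w ∧
      maximalWinAt A F v j ∪ targets F v ⊆ maximalWinAt A F w (memUpdate A F j v w) := by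
  have hex : ∃ j' : Fin (k.choose (k / 2)), maximalWinAt A F w j' ∈ maximalWins A F w ∧
      maximalWinAt A F v j ∪ targets F v ⊆ maximalWinAt A F w j' := by
    obtain ⟨S', hS', hsub⟩ := h.exists_subset_mem_maximalWins
    obtain ⟨j', rfl⟩ := exists_maximalWinAt_eq hS'
    exact ⟨j', hS', hsub⟩
  rw [memUpdate, dif_pos hex]
  exact hex.choose_spec

variable {j₀ : Fin (k.choose (k / 2))} {v₀ : V} {π : ℕ → V}

lemma trackedSet_step (hπ : IsPlay A v₀ π)
    (hc : MemConsistentAdam A (adamMemory A F j₀) (adamMove A F) π) {n : ℕ}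
    (hn : trackedSet A F j₀ π n ∈ maximalWins A F (π n)) :
    trackedSet A F j₀ π (n + 1) ∈ maximalWins A F (π (n + 1)) ∧
      trackedSet A F j₀ π n ∪ targets F (π n) ⊆ trackedSet A F j₀ π (n + 1) := by
  have hwin := (mem_maximalWins.1 hn).prop
  have hnext : AdamWinsAfter A F (trackedSet A F j₀ π n ∪ targets F (π n)) (π (n + 1)) := by
    by_cases hv : A.eve (π n)
    · exact hwin.eve_move hv (hπ.2 n)
    · rw [hc n hv]
      exact adamWinsAfter_adamMove hwin
  exact memUpdate_spec hnext

lemma trackedSet_spec (hπ : IsPlay A v₀ π)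
    (hc : MemConsistentAdam A (adamMemory A F j₀) (adamMove A F) π)
    (h₀ : maximalWinAt A F v₀ j₀ ∈ maximalWins A F v₀) (n : ℕ) :
    trackedSet A F j₀ π n ∈ maximalWins A F (π n) ∧
      ∀ m < n, targets F (π m) ⊆ trackedSet A F j₀ π n := by
  induction n with
  | zero => exact ⟨by simpa [trackedSet, memTrace, adamMemory, hπ.1] using h₀, by simp⟩
  | succ n ih =>
    obtain ⟨hmem, hgrow⟩ := trackedSet_step hπ hc ih.1
    refine ⟨hmem, fun m hm => ?_⟩
    rcases Nat.lt_succ_iff_lt_or_eq.1 hm with hm | rfl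
    · exact (ih.2 m hm).trans (subset_union_left.trans hgrow)
    · exact subset_union_right.trans hgrow

end Strategy

theorem adam_memory_upper_bound_general {V : Type} {k : ℕ}
    (A : Arena V) (F : Fin k → Set V) (v0 : V)
    (h : AdamWinsGenReach A F v0) :
    ∃ (M : Type) (inst : Fintype M) (μ : MemStruct V M) (ν : V → M → V),
      @Fintype.card M inst ≤ Nat.choose k (k / 2) ∧ AdamWinsWithMem A F v0 μ ν := by
  obtain ⟨S₀, hS₀, -⟩ := (adamWinsAfter_empty h).exists_subset_mem_maximalWins
  obtain ⟨j₀, hj₀⟩ := exists_maximalWinAt_eq hS₀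
  refine ⟨_, inferInstance, adamMemory A F j₀, adamMove A F, (Fintype.card_fin _).le,
    memLegal_adamMove, fun π hπ hc hreach => ?_⟩
  obtain ⟨N, hN⟩ := hreach.exists_bound
  obtain ⟨hmem, hvisited⟩ := trackedSet_spec hπ hc (hj₀ ▸ hS₀) N
  refine (mem_maximalWins.1 hmem).prop.ne_univ (eq_univ_of_forall fun i => ?_)
  obtain ⟨m, hm, hmi⟩ := hN i
  exact hvisited m hm (mem_targets.2 hmi)

/-- if Adam wins a generalized reachability game with `k` sets from `v0`,
he has a winning strategy with at most `C(k, ⌊k/2⌋)` memory states. -/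
theorem adam_memory_upper_bound {V : Type} [Fintype V] {k : ℕ}
    (A : Arena V) (F : Fin k → Set V) (v0 : V)
    (h : AdamWinsGenReach A F v0) :
    ∃ (M : Type) (inst : Fintype M) (μ : MemStruct V M) (ν : V → M → V),
      @Fintype.card M inst ≤ Nat.choose k (k / 2) ∧ AdamWinsWithMem A F v0 μ ν :=
  adam_memory_upper_bound_general A F v0 h
end
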